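/- arXiv:1203.0946 — 2 statements merged into one kernel-verified Lean document; each statement's English description precedes it below -/
import Mathlib

section
/- Let m, n ≥ 2, let W be the finite-dimensional real vector space of biquadratic forms, i.e. real polynomials in variables x₁,…,x_m, y₁,…,y_n that are homogeneous of degree 2 in the x-variables and homogeneous of degree 2 in the y-variables, and let P ⊆ W be the convex cone of those forms p with p(x,y) ≥ 0 for all x ∈ ℝ^m and y ∈ ℝ^n. Then P is not a basic closed semialgebraic set: there do not exist finitely many real polynomial functions g₁,…,g_k on W (polynomials in the coefficients of a biquadratic form) such that P = {p ∈ W : gᵢ(p) ≥ 0 for all i = 1,…,k}. In particular P, which is canonically identified with the cone Hom(S₊(V), S₊(W*)), is not a spectrahedron. -/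
open MvPolynomial

/-- The weight function giving variables `xᵢ` bidegree `(1,0)` and variables `yⱼ`
bidegree `(0,1)`. -/
def biquadWeight (m n : ℕ) : (Fin m ⊕ Fin n) → ℕ × ℕ :=
  Sum.elim (fun _ => (1, 0)) (fun _ => (0, 1))

/-- The space `W` of biquadratic forms: polynomials in `x₁,…,x_m, y₁,…,y_n` that are
homogeneous of degree `2` in the `x`-variables and of degree `2` in the `y`-variables. -/
noncomputable def BiquadSpace (m n : ℕ) : Submodule ℝ (MvPolynomial (Fin m ⊕ Fin n) ℝ) :=
  weightedHomogeneousSubmodule ℝ (biquadWeight m n) (2, 2)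

/-- `G : W → ℝ` is a polynomial function on the real vector space `W`: a polynomial in
finitely many linear coordinates of `W`. -/
def IsPolyFun {W : Type*} [AddCommGroup W] [Module ℝ W] (G : W → ℝ) : Prop :=
  ∃ (k : ℕ) (φ : Fin k → (W →ₗ[ℝ] ℝ)) (q : MvPolynomial (Fin k) ℝ),
    ∀ w, G w = eval (fun i => φ i w) q

/-!
Restrict to the plane of forms
`Γ(t, s) = (x₁y₁ - t x₀y₀)² + (x₀y₁ - x₁y₀)² - s (x₀y₀)²`.
Since `x₀y₀ · x₁y₁ = x₀y₁ · x₁y₀`, it is nonnegative when `s ≤ 0` and when `-2 ≤ t ≤ 0`,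
`s ≤ t²`, while for `t ≥ 0` its value at `x = y = (1, √t)` is `-s`.
A polynomial `q(t, s) = sᵏ r(t, s)` with `r(t, 0) ≢ 0` that is nonnegative on these two regions
has `k` even (for `t < 0` both signs of `s` are allowed) and `r(t, 0) > 0` for small `t > 0`
(from `s < 0`), so `q ≥ 0` also for small `t, s > 0`. Hence finitely many polynomials that are
nonnegative on the cone are all nonnegative at some `Γ(t, s)` with `t, s > 0`, which lies outside
the cone. A spectrahedron is itself basic closed semialgebraic: `M ⪰ 0` iff `M` is symmetric and
`det (X + M)` has nonnegative coefficients.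
-/

open Filter Topology Set

theorem mul_pos_of_nonneg_of_mul_pos {R : Type*} [CommRing R] [LinearOrder R]
    [IsStrictOrderedRing R] {a b c : R} (hab : 0 ≤ a * b) (hbc : 0 < b * c) (ha : a ≠ 0) :
    0 < a * c := by
  have hb : b ≠ 0 := by rintro rfl; simp at hbc
  have hab' : 0 < a * b := lt_of_le_of_ne hab (mul_ne_zero ha hb).symm
  have : 0 < a * c * (b * b) := by
    rw [show a * c * (b * b) = a * b * (b * c) by ring]
    exact mul_pos hab' hbc
  exact pos_of_mul_pos_left this (mul_self_nonneg b)

namespace Polynomial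

theorem eventually_eval_ne_zero {R : Type*} [CommRing R] [IsDomain R] [TopologicalSpace R]
    [T1Space R] {P : R[X]} (hP : P ≠ 0) (a : R) : ∀ᶠ t in 𝓝[≠] a, P.eval t ≠ 0 :=
  (finite_setOfPred_isRoot hP).eventually_cofinite_notMem.filter_mono (nhdsNE_le_cofinite a)

theorem exists_eq_X_pow_mul_eval_zero_ne_zero {R : Type*} [CommRing R] {q : R[X]} (hq : q ≠ 0) :
    ∃ (k : ℕ) (r : R[X]), q = X ^ k * r ∧ r.eval 0 ≠ 0 := by
  obtain ⟨r, hqr, hr⟩ := q.exists_eq_pow_rootMultiplicity_mul_and_not_dvd hq 0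
  rw [dvd_iff_isRoot] at hr
  exact ⟨_, r, by simpa using hqr, hr⟩

theorem eval_pos_of_coeff_nonneg {R : Type*} [CommRing R] [LinearOrder R] [IsStrictOrderedRing R]
    {p : R[X]} (hp0 : p ≠ 0) (hp : ∀ k ≤ p.natDegree, 0 ≤ p.coeff k) {u : R} (hu : 0 < u) :
    0 < p.eval u := by
  rw [eval_eq_sum_range]
  refine Finset.sum_pos' (fun k hk => mul_nonneg (hp k (Finset.mem_range_succ_iff.1 hk))
    (pow_nonneg hu.le k)) ⟨p.natDegree, Finset.self_mem_range_succ _, ?_⟩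
  exact mul_pos (lt_of_le_of_ne (hp _ le_rfl) (leadingCoeff_ne_zero.2 hp0).symm) (pow_pos hu _)

theorem eventually_evalEval_mul_pos (r : ℝ[X][X]) {t : ℝ} (ht : (r.eval 0).eval t ≠ 0) :
    ∀ᶠ s in 𝓝 0, 0 < r.evalEval t s * (r.eval 0).eval t := by
  have hcont : Continuous fun s => r.evalEval t s * (r.eval 0).eval t := by
    simp_rw [← map_evalRingHom_eval]
    fun_prop
  have h0 : r.evalEval t 0 = (r.eval 0).eval t := by simp [evalEval]
  exact hcont.continuousAt.eventually (lt_mem_nhds (by simpa only [h0] using mul_self_pos.2 ht))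

theorem eventually_evalEval_nonneg_of_cusp (q : ℝ[X][X])
    (hleft : ∀ᶠ t in 𝓝[<] 0, ∀ᶠ s in 𝓝 0, 0 ≤ q.evalEval t s)
    (hright : ∀ᶠ t in 𝓝[>] 0, ∀ᶠ s in 𝓝[<] 0, 0 ≤ q.evalEval t s) :
    ∀ᶠ t in 𝓝[>] 0, ∀ᶠ s in 𝓝[>] 0, 0 ≤ q.evalEval t s := by
  rcases eq_or_ne q 0 with rfl | hq
  · simp
  obtain ⟨k, r, rfl, hr⟩ := exists_eq_X_pow_mul_eval_zero_ne_zero hq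
  set P := r.eval 0
  have hP := eventually_eval_ne_zero hr 0
  -- for `s ≠ 0` near `0`, the sign of `q (t, s)` is the sign of `s ^ k * P t`
  have hsign : ∀ t, P.eval t ≠ 0 → ∀ᶠ s in 𝓝 0,
      (s ≠ 0 → 0 ≤ (X ^ k * r).evalEval t s → 0 < s ^ k * P.eval t) ∧
      (0 < s ^ k * P.eval t → 0 < (X ^ k * r).evalEval t s) := by
    intro t ht
    filter_upwards [eventually_evalEval_mul_pos r ht] with s hrs
    simp only [evalEval_mul, evalEval_pow, evalEval_X]
    refine ⟨fun hs hq => mul_pos_of_nonneg_of_mul_pos hq hrs (pow_ne_zero k hs), fun hsP => ?_⟩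
    exact mul_pos_of_nonneg_of_mul_pos hsP.le (by rwa [mul_comm]) (left_ne_zero_of_mul hsP.ne')
  have hk : Even k := by
    obtain ⟨t, htq, htP⟩ := (hleft.and (hP.filter_mono (nhdsLT_le_nhdsNE 0))).exists
    have h := htq.and (hsign t htP)
    obtain ⟨s₁, ⟨hq₁, hP₁, -⟩, hs₁⟩ :=
      ((h.filter_mono (nhdsWithin_le_nhds (s := Ioi 0))).and self_mem_nhdsWithin).exists
    obtain ⟨s₂, ⟨hq₂, hP₂, -⟩, hs₂⟩ :=
      ((h.filter_mono (nhdsWithin_le_nhds (s := Iio 0))).and self_mem_nhdsWithin).exists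
    have hPt : 0 < P.eval t := pos_of_mul_pos_right (hP₁ hs₁.ne' hq₁) (pow_pos hs₁ k).le
    have hs₂k : 0 < s₂ ^ k := pos_of_mul_pos_left (hP₂ hs₂.ne hq₂) hPt.le
    by_contra hodd
    exact (Nat.not_even_iff_odd.1 hodd).pow_neg (show s₂ < 0 from hs₂) |>.not_gt hs₂k
  filter_upwards [hright, hP.filter_mono (nhdsGT_le_nhdsNE 0)] with t htq htP
  obtain ⟨s, ⟨hq, hP', -⟩, hs⟩ :=
    ((htq.and ((hsign t htP).filter_mono nhdsWithin_le_nhds)).and self_mem_nhdsWithin).exists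
  have hPt : 0 < P.eval t := pos_of_mul_pos_right (hP' hs.ne hq) (hk.pow_pos hs.ne).le
  filter_upwards [(hsign t htP).filter_mono nhdsWithin_le_nhds, self_mem_nhdsWithin]
    with s' hs' hs'pos
  exact (hs'.2 (mul_pos (pow_pos hs'pos k) hPt)).le

end Polynomial

namespace Matrix

variable {n : Type*} [Fintype n] [DecidableEq n]

theorem IsHermitian.charpoly_neg_eq {M : Matrix n n ℝ} (hM : M.IsHermitian) :
    (-M).charpoly = ∏ i, (Polynomial.X + Polynomial.C (hM.eigenvalues i)) := by
  refine Polynomial.funext fun u => ?_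
  have h := congrArg (Polynomial.eval (-u)) hM.charpoly_eq
  simp only [eval_charpoly, Polynomial.eval_prod, Polynomial.eval_sub, Polynomial.eval_add,
    Polynomial.eval_X, Polynomial.eval_C, RCLike.ofReal_real_eq_id, id] at h ⊢
  have hneg : scalar n u - -M = -(scalar n (-u) - M) := by simp [sub_eq_add_neg, add_comm]
  rw [hneg, det_neg, h, ← Finset.card_univ, ← Finset.prod_const, ← Finset.prod_mul_distrib]
  exact Finset.prod_congr rfl fun i _ => by ring

theorem posSemidef_iff_coeff_charpoly_neg_nonneg {M : Matrix n n ℝ} :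
    M.PosSemidef ↔ M.IsHermitian ∧ ∀ k ≤ Fintype.card n, 0 ≤ (-M).charpoly.coeff k := by
  refine ⟨fun hM => ⟨hM.isHermitian, fun k hk => ?_⟩, fun ⟨hM, hcoeff⟩ => ?_⟩
  · rw [hM.isHermitian.charpoly_neg_eq, Finset.prod_X_add_C_coeff _ _ (by simpa using hk)]
    exact Finset.sum_nonneg fun s _ => Finset.prod_nonneg fun i _ => hM.eigenvalues_nonneg i
  · refine hM.posSemidef_iff_eigenvalues_nonneg.2 fun i => not_lt.1 fun hi => ?_
    have hroot : (-M).charpoly.eval (-hM.eigenvalues i) = 0 := by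
      rw [hM.charpoly_neg_eq, Polynomial.eval_prod]
      exact Finset.prod_eq_zero (Finset.mem_univ i) (by simp)
    refine (Polynomial.eval_pos_of_coeff_nonneg (charpoly_monic _).ne_zero ?_
      (neg_pos.2 hi)).ne' hroot
    rwa [charpoly_natDegree_eq_dim]

theorem coeff_charpoly_eq_eval_univ {R : Type*} [CommRing R] (A : Matrix n n R) (k : ℕ) :
    A.charpoly.coeff k = eval (fun v => A v.1 v.2) ((charpoly.univ R n).coeff k) := by
  rw [MvPolynomial.eval, charpoly.univ_coeff_eval₂Hom]
  rfl

end Matrix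

section BasicClosed

variable {V W : Type*} [AddCommGroup V] [Module ℝ V] [AddCommGroup W] [Module ℝ W]

def IsBasicClosedSemialgebraic (S : Set W) : Prop :=
  ∃ (k : ℕ) (g : Fin k → W → ℝ), (∀ i, IsPolyFun (g i)) ∧ S = {w | ∀ i, 0 ≤ g i w}

theorem IsPolyFun.of_eval_linear {ι : Type*} [Fintype ι] (φ : ι → W →ₗ[ℝ] ℝ)
    (q : MvPolynomial ι ℝ) {G : W → ℝ} (hG : ∀ w, G w = eval (fun i => φ i w) q) :
    IsPolyFun G := by
  let e := Fintype.equivFin ι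
  refine ⟨Fintype.card ι, fun j => φ (e.symm j), rename e q, fun w => ?_⟩
  rw [eval_rename, hG]
  simp [Function.comp_def]

theorem IsPolyFun.comp_linearMap {G : V → ℝ} (hG : IsPolyFun G) (ψ : W →ₗ[ℝ] V) :
    IsPolyFun (G ∘ ψ) := by
  obtain ⟨k, φ, q, hq⟩ := hG
  exact ⟨k, fun i => φ i ∘ₗ ψ, q, fun w => hq (ψ w)⟩

theorem IsPolyFun.exists_evalEval_comp {G : W → ℝ} (hG : IsPolyFun G) {γ : ℝ → ℝ → W}
    (hγ : ∀ φ : W →ₗ[ℝ] ℝ, ∃ q : Polynomial (Polynomial ℝ), ∀ t s, φ (γ t s) = q.evalEval t s) :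
    ∃ q : Polynomial (Polynomial ℝ), ∀ t s, G (γ t s) = q.evalEval t s := by
  obtain ⟨k, φ, Q, hQ⟩ := hG
  choose r hr using fun i => hγ (φ i)
  refine ⟨aeval r Q, fun t s => ?_⟩
  rw [hQ, ← Polynomial.coe_evalEvalRingHom, aeval_def, hom_eval₂]
  simp only [hr]
  rw [Subsingleton.elim ((Polynomial.evalEvalRingHom t s).comp _) (RingHom.id ℝ)]
  rfl

theorem isBasicClosedSemialgebraic_of_finite {ι : Type*} [Finite ι] {S : Set W}
    (g : ι → W → ℝ) (hg : ∀ i, IsPolyFun (g i)) (hS : S = {w | ∀ i, 0 ≤ g i w}) :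
    IsBasicClosedSemialgebraic S := by
  obtain ⟨k, ⟨e⟩⟩ := Finite.exists_equiv_fin ι
  refine ⟨k, fun j => g (e.symm j), fun j => hg _, hS.trans ?_⟩
  ext w
  exact e.symm.forall_congr_right.symm

theorem IsBasicClosedSemialgebraic.preimage {S : Set V} (hS : IsBasicClosedSemialgebraic S)
    (ψ : W →ₗ[ℝ] V) : IsBasicClosedSemialgebraic (ψ ⁻¹' S) := by
  obtain ⟨k, g, hg, rfl⟩ := hS
  exact ⟨k, fun i => g i ∘ ψ, fun i => (hg i).comp_linearMap ψ, rfl⟩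

theorem isBasicClosedSemialgebraic_setOf_posSemidef (n : Type*) [Fintype n] [DecidableEq n] :
    IsBasicClosedSemialgebraic {M : Matrix n n ℝ | M.PosSemidef} := by
  let entry (v : n × n) : Matrix n n ℝ →ₗ[ℝ] ℝ := Matrix.entryLinearMap ℝ ℝ v.1 v.2
  refine isBasicClosedSemialgebraic_of_finite
    (Sum.elim (fun (v : n × n) (M : Matrix n n ℝ) => -(M v.1 v.2 - M v.2 v.1) ^ 2)
      (fun (k : Fin (Fintype.card n + 1)) (M : Matrix n n ℝ) => (-M).charpoly.coeff k)) ?_ ?_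
  · rintro (v | k)
    · exact .of_eval_linear entry (-(X v - X v.swap) ^ 2) fun M => by simp [entry]
    · refine .of_eval_linear (-entry ·) ((Matrix.charpoly.univ ℝ n).coeff k) fun M => ?_
      rw [Sum.elim_inr, Matrix.coeff_charpoly_eq_eval_univ]
      rfl
  · ext M
    simp only [Set.mem_ofPred_eq, Sum.forall, Sum.elim_inl, Sum.elim_inr,
      Matrix.posSemidef_iff_coeff_charpoly_neg_nonneg, Matrix.IsHermitian.ext_iff]
    refine and_congr ?_ ⟨fun h k => h k (Nat.lt_succ_iff.1 k.2), fun h k hk => h ⟨k, by omega⟩⟩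
    simp only [Prod.forall, star_trivial, neg_nonneg, sq_nonpos_iff, sub_eq_zero]
    exact forall_comm

end BasicClosed

section CuspFamily

variable {m n : ℕ}

def biquadNonnegCone (m n : ℕ) : Set (BiquadSpace m n) :=
  {p | ∀ (x : Fin m → ℝ) (y : Fin n → ℝ),
    0 ≤ eval (Sum.elim x y) (p : MvPolynomial (Fin m ⊕ Fin n) ℝ)}

noncomputable def xyMonomial (i : Fin m) (j : Fin n) : MvPolynomial (Fin m ⊕ Fin n) ℝ :=
  X (Sum.inl i) * X (Sum.inr j)

theorem xyMonomial_mem (i : Fin m) (j : Fin n) :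
    xyMonomial i j ∈ weightedHomogeneousSubmodule ℝ (biquadWeight m n) (1, 1) := by
  rw [mem_weightedHomogeneousSubmodule, xyMonomial]
  exact (isWeightedHomogeneous_X ℝ _ (Sum.inl i)).mul (isWeightedHomogeneous_X ℝ _ (Sum.inr j))

theorem mul_mem_biquadSpace {p q : MvPolynomial (Fin m ⊕ Fin n) ℝ}
    (hp : p ∈ weightedHomogeneousSubmodule ℝ (biquadWeight m n) (1, 1))
    (hq : q ∈ weightedHomogeneousSubmodule ℝ (biquadWeight m n) (1, 1)) :
    p * q ∈ BiquadSpace m n := by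
  rw [BiquadSpace, mem_weightedHomogeneousSubmodule] at *
  exact hp.mul hq

variable (i₀ i₁ : Fin m) (j₀ j₁ : Fin n)

noncomputable def cuspForm₀ : BiquadSpace m n :=
  ⟨xyMonomial i₁ j₁ * xyMonomial i₁ j₁
      + (xyMonomial i₀ j₁ - xyMonomial i₁ j₀) * (xyMonomial i₀ j₁ - xyMonomial i₁ j₀),
    add_mem (mul_mem_biquadSpace (xyMonomial_mem _ _) (xyMonomial_mem _ _))
      (mul_mem_biquadSpace (sub_mem (xyMonomial_mem _ _) (xyMonomial_mem _ _))
        (sub_mem (xyMonomial_mem _ _) (xyMonomial_mem _ _)))⟩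

noncomputable def cuspForm₁ : BiquadSpace m n :=
  ⟨(-2 : ℝ) • (xyMonomial i₀ j₀ * xyMonomial i₁ j₁),
    Submodule.smul_mem _ _ (mul_mem_biquadSpace (xyMonomial_mem _ _) (xyMonomial_mem _ _))⟩

noncomputable def cuspForm₂ : BiquadSpace m n :=
  ⟨xyMonomial i₀ j₀ * xyMonomial i₀ j₀,
    mul_mem_biquadSpace (xyMonomial_mem _ _) (xyMonomial_mem _ _)⟩

noncomputable def cuspFamily (t s : ℝ) : BiquadSpace m n :=
  cuspForm₀ i₀ i₁ j₀ j₁ + t • cuspForm₁ i₀ i₁ j₀ j₁ + (t ^ 2 - s) • cuspForm₂ i₀ j₀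

theorem eval_cuspFamily (t s : ℝ) (x : Fin m → ℝ) (y : Fin n → ℝ) :
    eval (Sum.elim x y) (cuspFamily i₀ i₁ j₀ j₁ t s : MvPolynomial (Fin m ⊕ Fin n) ℝ) =
      (x i₁ * y j₁ - t * (x i₀ * y j₀)) ^ 2 + (x i₀ * y j₁ - x i₁ * y j₀) ^ 2
        - s * (x i₀ * y j₀) ^ 2 := by
  simp only [cuspFamily, cuspForm₀, cuspForm₁, cuspForm₂, xyMonomial, neg_smul, SetLike.mk_smul_mk,
    smul_neg, AddMemClass.mk_add_mk, map_add, map_mul, eval_X, Sum.elim_inl, Sum.elim_inr, map_sub,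
    map_neg, smul_eval]
  ring

theorem exists_evalEval_eq_cuspFamily (φ : BiquadSpace m n →ₗ[ℝ] ℝ) :
    ∃ q : Polynomial (Polynomial ℝ), ∀ t s, φ (cuspFamily i₀ i₁ j₀ j₁ t s) = q.evalEval t s := by
  let T : Polynomial (Polynomial ℝ) := Polynomial.C Polynomial.X
  refine ⟨.CC (φ (cuspForm₀ i₀ i₁ j₀ j₁)) + T * .CC (φ (cuspForm₁ i₀ i₁ j₀ j₁))
    + (T ^ 2 - Polynomial.X) * .CC (φ (cuspForm₂ i₀ j₀)), fun t s => ?_⟩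
  simp [cuspFamily, T, Polynomial.evalEval_C]

theorem cuspFamily_mem_of_nonpos {s : ℝ} (t : ℝ) (hs : s ≤ 0) :
    cuspFamily i₀ i₁ j₀ j₁ t s ∈ biquadNonnegCone m n := by
  intro x y
  rw [eval_cuspFamily]
  have : 0 ≤ -s := neg_nonneg.2 hs
  nlinarith [sq_nonneg (x i₁ * y j₁ - t * (x i₀ * y j₀)), sq_nonneg (x i₀ * y j₁ - x i₁ * y j₀),
    mul_nonneg this (sq_nonneg (x i₀ * y j₀))]

theorem cuspFamily_mem_of_le_sq {t s : ℝ} (ht₀ : -2 ≤ t) (ht : t ≤ 0) (hs : s ≤ t ^ 2) :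
    cuspFamily i₀ i₁ j₀ j₁ t s ∈ biquadNonnegCone m n := by
  intro x y
  -- a sum of squares because `(x i₀ y j₀) (x i₁ y j₁) = (x i₀ y j₁) (x i₁ y j₀)`
  have hsos : (x i₁ * y j₁ - t * (x i₀ * y j₀)) ^ 2 + (x i₀ * y j₁ - x i₁ * y j₀) ^ 2
        - s * (x i₀ * y j₀) ^ 2 = (x i₁ * y j₁) ^ 2 + (t + 2) / 2 * (x i₀ * y j₁ - x i₁ * y j₀) ^ 2
        + -t / 2 * (x i₀ * y j₁ + x i₁ * y j₀) ^ 2 + (t ^ 2 - s) * (x i₀ * y j₀) ^ 2 := by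
    ring
  rw [eval_cuspFamily, hsos]
  have : 0 ≤ t + 2 := by linarith
  have : 0 ≤ -t := by linarith
  have : 0 ≤ t ^ 2 - s := by linarith
  positivity

theorem cuspFamily_notMem (hi : i₀ ≠ i₁) (hj : j₀ ≠ j₁) {t s : ℝ} (ht : 0 ≤ t) (hs : 0 < s) :
    cuspFamily i₀ i₁ j₀ j₁ t s ∉ biquadNonnegCone m n := by
  intro h
  have := h (fun i => if i = i₀ then 1 else if i = i₁ then √t else 0)
    (fun j => if j = j₀ then 1 else if j = j₁ then √t else 0)
  simp only [eval_cuspFamily, hi.symm, hj.symm, ↓reduceIte, Real.mul_self_sqrt ht, mul_one,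
    one_mul, sub_self, zero_pow two_ne_zero, add_zero, one_pow, zero_sub, Left.nonneg_neg_iff] at this
  exact this.not_gt hs

end CuspFamily

theorem not_isBasicClosedSemialgebraic_biquadNonnegCone {m n : ℕ} (hm : 2 ≤ m) (hn : 2 ≤ n) :
    ¬ IsBasicClosedSemialgebraic (biquadNonnegCone m n) := by
  obtain ⟨i₀, i₁, hi⟩ := (Fin.nontrivial_iff_two_le.2 hm).exists_pair_ne
  obtain ⟨j₀, j₁, hj⟩ := (Fin.nontrivial_iff_two_le.2 hn).exists_pair_ne
  rintro ⟨k, g, hg, hP⟩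
  let Γ := cuspFamily i₀ i₁ j₀ j₁
  choose q hq using fun i =>
    (hg i).exists_evalEval_comp (exists_evalEval_eq_cuspFamily i₀ i₁ j₀ j₁)
  have hmem : ∀ {t s}, Γ t s ∈ biquadNonnegCone m n → ∀ i, 0 ≤ (q i).evalEval t s := by
    intro t s h i
    rw [hP] at h
    exact hq i t s ▸ h i
  have hleft : ∀ᶠ t in 𝓝[<] 0, ∀ᶠ s in 𝓝 0, Γ t s ∈ biquadNonnegCone m n := by
    filter_upwards [Ioo_mem_nhdsLT (show (-2 : ℝ) < 0 by norm_num)] with t ht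
    filter_upwards [gt_mem_nhds (sq_pos_of_neg ht.2)] with s hs
    exact cuspFamily_mem_of_le_sq i₀ i₁ j₀ j₁ ht.1.le ht.2.le hs.le
  have hright : ∀ t, ∀ᶠ s in 𝓝[<] 0, Γ t s ∈ biquadNonnegCone m n := fun t =>
    eventually_mem_nhdsWithin.mono fun s hs => cuspFamily_mem_of_nonpos i₀ i₁ j₀ j₁ t hs.le
  have hpos : ∀ i, ∀ᶠ t in 𝓝[>] 0, ∀ᶠ s in 𝓝[>] 0, 0 ≤ (q i).evalEval t s := fun i =>
    (q i).eventually_evalEval_nonneg_of_cusp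
      (hleft.mono fun t ht => ht.mono fun s hs => hmem hs i)
      (Eventually.of_forall fun t => (hright t).mono fun s hs => hmem hs i)
  obtain ⟨t, ht, hts⟩ := (eventually_mem_nhdsWithin.and (eventually_all.2 hpos)).exists
  obtain ⟨s, hs, hsi⟩ := (eventually_mem_nhdsWithin.and (eventually_all.2 hts)).exists
  refine cuspFamily_notMem i₀ i₁ j₀ j₁ hi hj (le_of_lt ht) hs ?_
  rw [hP]
  exact fun i => (hq i t s).symm ▸ hsi i

/-- For `m, n ≥ 2` the cone `P` of nonnegative biquadratic forms (canonically identified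
with `Hom(S₊(V), S₊(W*))`) is not a basic closed semialgebraic subset of the space of
biquadratic forms: it is not the set of simultaneous nonnegativity of finitely many
polynomial functions in the coefficients.  In particular it is not a spectrahedron. -/
theorem nonneg_biquadratics_not_basic_closed_semialgebraic (m n : ℕ) (hm : 2 ≤ m) (hn : 2 ≤ n) :
    (¬ ∃ (k : ℕ) (g : Fin k → (BiquadSpace m n → ℝ)),
      (∀ i, IsPolyFun (g i)) ∧
      {p : BiquadSpace m n | ∀ (x : Fin m → ℝ) (y : Fin n → ℝ),
          0 ≤ eval (Sum.elim x y) (p : MvPolynomial (Fin m ⊕ Fin n) ℝ)} =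
        {p : BiquadSpace m n | ∀ i, 0 ≤ g i p}) ∧
    ¬ ∃ (N : ℕ) (ψ : BiquadSpace m n →ₗ[ℝ] Matrix (Fin N) (Fin N) ℝ),
      Function.Injective ψ ∧
      {p : BiquadSpace m n | ∀ (x : Fin m → ℝ) (y : Fin n → ℝ),
          0 ≤ eval (Sum.elim x y) (p : MvPolynomial (Fin m ⊕ Fin n) ℝ)} =
        {p : BiquadSpace m n | (ψ p).PosSemidef} := by
  refine ⟨not_isBasicClosedSemialgebraic_biquadNonnegCone hm hn, ?_⟩
  rintro ⟨N, ψ, -, hψ⟩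
  apply not_isBasicClosedSemialgebraic_biquadNonnegCone hm hn
  rw [biquadNonnegCone, hψ]
  exact (isBasicClosedSemialgebraic_setOf_posSemidef (Fin N)).preimage ψ
end

section
/- Let V and W be finite-dimensional real vector spaces, let n > 0 be an integer, let P ⊆ V be a compact convex set, let E ⊆ P be the set of extreme points of P, and let h : Vⁿ → W be a multilinear map. Then the convex hull of h(P × ⋯ × P) (n factors) equals the convex hull of h(E × ⋯ × E). -/
/-! Minkowski: a compact convex set `K` in finite dimension is the convex hull of its extreme
points. By induction on the dimension: if `K` has empty interior it lives in a proper affine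
subspace; otherwise every point of `K` lies on a chord with endpoints in the frontier, and a
frontier point lies in an exposed face with empty interior, whose extreme points are extreme
in `K`. Since `h` is linear in each argument, `h(conv E, …, conv E) ⊆ conv h(E, …, E)`
follows by convexifying one argument at a time. -/

open Set Module Function Topology

section ExtremePoints

variable {𝕜 E F : Type*} [Ring 𝕜] [PartialOrder 𝕜] [IsOrderedRing 𝕜]
  [AddCommGroup E] [Module 𝕜 E] [AddCommGroup F] [Module 𝕜 F]

theorem AffineMap.image_extremePoints_subset (f : E →ᵃ[𝕜] F) (hf : Injective f) (s : Set E) :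
    f '' s.extremePoints 𝕜 ⊆ (f '' s).extremePoints 𝕜 := by
  rintro _ ⟨x, hx, rfl⟩
  refine ⟨mem_image_of_mem f hx.1, ?_⟩
  rintro _ ⟨y, hy, rfl⟩ _ ⟨z, hz, rfl⟩ hxyz
  rw [← image_openSegment, hf.mem_set_image] at hxyz
  exact congrArg f (hx.2 hy hz hxyz)

theorem AffineMap.image_subset_convexHull_extremePoints (f : E →ᵃ[𝕜] F) (hf : Injective f)
    {s : Set E} (hs : s ⊆ convexHull 𝕜 (s.extremePoints 𝕜)) :
    f '' s ⊆ convexHull 𝕜 ((f '' s).extremePoints 𝕜) :=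
  calc f '' s ⊆ f '' convexHull 𝕜 (s.extremePoints 𝕜) := image_mono hs
    _ = convexHull 𝕜 (f '' s.extremePoints 𝕜) := f.image_convexHull _
    _ ⊆ convexHull 𝕜 ((f '' s).extremePoints 𝕜) :=
      convexHull_mono (f.image_extremePoints_subset hf s)

end ExtremePoints

section Minkowski

variable {V : Type*} [NormedAddCommGroup V] [NormedSpace ℝ V] {K : Set V}

theorem IsCompact.exists_nonneg_add_smul_mem_frontier (hK : IsCompact K) {x : V} (hx : x ∈ K)
    {u : V} (hu : u ≠ 0) : ∃ t : ℝ, 0 ≤ t ∧ x + t • u ∈ frontier K := by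
  set φ : ℝ → V := fun t => x + t • u
  have hφ : IsClosedEmbedding φ :=
    (Homeomorph.addLeft x).isClosedEmbedding.comp (isClosedEmbedding_smul_left hu)
  have hT : IsCompact (φ ⁻¹' K) := hφ.isCompact_preimage hK
  have h0 : (0 : ℝ) ∈ φ ⁻¹' K := by simpa [φ] using hx
  refine ⟨sSup (φ ⁻¹' K), le_csSup hT.bddAbove h0,
    (mem_frontier_iff_notMem_interior (s := K) (hT.sSup_mem ⟨0, h0⟩)).2 fun hint => ?_⟩
  have hnear : ∀ᶠ t in 𝓝 (sSup (φ ⁻¹' K)), φ t ∈ K :=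
    hφ.continuous.continuousAt.eventually (mem_interior_iff_mem_nhds.1 hint)
  obtain ⟨t, hgt, ht⟩ := hnear.exists_gt
  exact (le_csSup hT.bddAbove ht).not_gt hgt

theorem IsCompact.exists_mem_frontier_mem_segment [Nontrivial V] (hK : IsCompact K) {x : V}
    (hx : x ∈ K) : ∃ a ∈ frontier K, ∃ b ∈ frontier K, x ∈ segment ℝ a b := by
  obtain ⟨u, hu⟩ := exists_ne (0 : V)
  obtain ⟨s, hs, hsK⟩ := hK.exists_nonneg_add_smul_mem_frontier hx (neg_ne_zero.2 hu)
  obtain ⟨t, ht, htK⟩ := hK.exists_nonneg_add_smul_mem_frontier hx hu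
  refine ⟨_, hsK, _, htK, mem_segment_iff_sameRay.2 ?_⟩
  simpa using ((SameRay.refl u).nonneg_smul_left hs).nonneg_smul_right ht

theorem Convex.exists_isExposed_of_notMem_interior (hK : Convex ℝ K)
    (hint : (interior K).Nonempty) {p : V} (hp : p ∈ K) (hpi : p ∉ interior K) :
    ∃ F, IsExposed ℝ K F ∧ p ∈ F ∧ interior F = ∅ := by
  obtain ⟨l, hl⟩ := geometric_hahn_banach_open_point hK.interior isOpen_interior hpi
  have hle : ∀ w ∈ K, l w ≤ l p := by
    refine fun w hw => closure_minimal (fun y hy => (hl y hy).le)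
      (isClosed_Iic.preimage l.continuous) ?_
    rw [hK.closure_interior_eq_closure_of_nonempty_interior hint]
    exact subset_closure hw
  refine ⟨{w ∈ K | ∀ r ∈ K, l r ≤ l w}, fun _ => ⟨l, rfl⟩, ⟨hp, hle⟩,
    eq_empty_of_forall_notMem fun w hw => ?_⟩
  exact (hl w (interior_mono (sep_subset _ _) hw)).not_ge ((interior_subset hw).2 p hp)

theorem Convex.exists_affineMap_image_eq_of_interior_eq_empty [FiniteDimensional ℝ V]
    (hKv : Convex ℝ K) (hKc : IsCompact K) (hne : K.Nonempty) (hint : interior K = ∅) :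
    ∃ (U : Submodule ℝ V) (g : U →ᵃ[ℝ] V) (Q : Set U),
      U ≠ ⊤ ∧ Injective g ∧ IsCompact Q ∧ Convex ℝ Q ∧ g '' Q = K := by
  obtain ⟨y, hy⟩ := hne
  set U := (affineSpan ℝ K).direction
  have hU : U ≠ ⊤ := by
    rw [Ne, AffineSubspace.direction_eq_top_iff_of_nonempty ⟨y, subset_affineSpan ℝ K hy⟩,
      ← hKv.interior_nonempty_iff_affineSpan_eq_top, hint]
    exact not_nonempty_empty
  set g : U →ᵃ[ℝ] V := (AffineEquiv.constVAdd ℝ V y).toAffineMap.comp U.subtype.toAffineMap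
  have hg : IsClosedEmbedding g :=
    (Homeomorph.addLeft y).isClosedEmbedding.comp
      (LinearMap.isClosedEmbedding_of_injective (Submodule.ker_subtype U))
  refine ⟨U, g, g ⁻¹' K, hU, hg.injective, hg.isCompact_preimage hKc, hKv.affine_preimage g,
    image_preimage_eq_of_subset fun p hp => ?_⟩
  refine ⟨⟨p - y, ?_⟩, add_sub_cancel y p⟩
  exact AffineSubspace.vsub_mem_direction (subset_affineSpan ℝ K hp) (subset_affineSpan ℝ K hy)

theorem IsCompact.subset_convexHull_extremePoints [FiniteDimensional ℝ V] (hKc : IsCompact K)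
    (hKv : Convex ℝ K) : K ⊆ convexHull ℝ (K.extremePoints ℝ) := by
  induction hn : finrank ℝ V using Nat.strong_induction_on generalizing V with
  | _ n ih =>
  rcases subsingleton_or_nontrivial V with hV | hV
  · rw [extremePoints_eq_self]
    exact subset_convexHull ℝ K
  have flat : ∀ F : Set V, IsCompact F → Convex ℝ F → interior F = ∅ →
      F ⊆ convexHull ℝ (F.extremePoints ℝ) := by
    rintro F hFc hFv hF x hx
    obtain ⟨U, g, Q, hU, hg, hQc, hQv, rfl⟩ :=
      hFv.exists_affineMap_image_eq_of_interior_eq_empty hFc ⟨x, hx⟩ hF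
    exact g.image_subset_convexHull_extremePoints hg
      (ih _ (hn ▸ Submodule.finrank_lt hU) hQc hQv rfl) hx
  rcases (interior K).eq_empty_or_nonempty with hint | hint
  · exact flat K hKc hKv hint
  have hfrontier : frontier K ⊆ convexHull ℝ (K.extremePoints ℝ) := fun p hp => by
    obtain ⟨F, hF, hpF, hFint⟩ :=
      hKv.exists_isExposed_of_notMem_interior hint (hKc.isClosed.frontier_subset hp) hp.2
    exact convexHull_mono hF.isExtreme.extremePoints_subset_extremePoints
      (flat F (hF.isCompact hKc) (hF.convex hKv) hFint hpF)
  intro x hx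
  obtain ⟨a, ha, b, hb, hxab⟩ := hKc.exists_mem_frontier_mem_segment hx
  exact (convex_convexHull ℝ _).segment_subset (hfrontier ha) (hfrontier hb) hxab

end Minkowski

section Multilinear

variable {𝕜 ι W : Type*} {M : ι → Type*} [CommSemiring 𝕜] [PartialOrder 𝕜]
  [∀ i, AddCommMonoid (M i)] [∀ i, Module 𝕜 (M i)] [AddCommMonoid W] [Module 𝕜 W]

theorem MultilinearMap.image_convexHull_subset [Fintype ι] (h : MultilinearMap 𝕜 M W)
    (S : ∀ i, Set (M i)) :
    h '' {v | ∀ i, v i ∈ convexHull 𝕜 (S i)} ⊆ convexHull 𝕜 (h '' {v | ∀ i, v i ∈ S i}) := by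
  classical
  set C := convexHull 𝕜 (h '' {v | ∀ i, v i ∈ S i})
  -- convexify the coordinates in `s` one at a time, `h` being linear in each of them
  suffices key : ∀ (s : Finset ι) (v : ∀ i, M i), (∀ i ∈ s, v i ∈ convexHull 𝕜 (S i)) →
      (∀ i ∉ s, v i ∈ S i) → h v ∈ C by
    rintro _ ⟨v, hv, rfl⟩
    exact key Finset.univ v (fun i _ => hv i) fun i hi => absurd (Finset.mem_univ i) hi
  intro s
  induction s using Finset.induction_on with
  | empty =>
    exact fun v _ hv => subset_convexHull 𝕜 _ ⟨v, fun i => hv i (Finset.notMem_empty i), rfl⟩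
  | insert j s hj ih =>
    intro v hconv hS
    have hSj : S j ⊆ h.toLinearMap v j ⁻¹' C := by
      intro z hz
      rw [mem_preimage, MultilinearMap.toLinearMap_apply]
      refine ih _ (fun i hi => ?_) fun i hi => ?_
      · rw [update_of_ne (ne_of_mem_of_not_mem hi hj)]
        exact hconv i (Finset.mem_insert_of_mem hi)
      · rcases eq_or_ne i j with rfl | hij
        · rwa [update_self]
        · rw [update_of_ne hij]
          exact hS i (by simp [hij, hi])
    simpa [MultilinearMap.toLinearMap_apply] using
      convexHull_min hSj ((convex_convexHull 𝕜 _).linear_preimage _)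
        (hconv j (Finset.mem_insert_self j s))

theorem MultilinearMap.convexHull_image_convexHull [Fintype ι] (h : MultilinearMap 𝕜 M W)
    (S : ∀ i, Set (M i)) :
    convexHull 𝕜 (h '' {v | ∀ i, v i ∈ convexHull 𝕜 (S i)}) =
      convexHull 𝕜 (h '' {v | ∀ i, v i ∈ S i}) :=
  (convexHull_min (h.image_convexHull_subset S) (convex_convexHull 𝕜 _)).antisymm
    (convexHull_mono (image_mono fun _ hv i => subset_convexHull 𝕜 _ (hv i)))

end Multilinear

theorem convexHull_multilinear_image_eq_of_extremePoints_general {V W : Type*}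
    [NormedAddCommGroup V] [NormedSpace ℝ V] [FiniteDimensional ℝ V]
    [AddCommGroup W] [Module ℝ W]
    (n : ℕ)
    (P : Set V) (hPconv : Convex ℝ P) (hPcomp : IsCompact P)
    (h : MultilinearMap ℝ (fun _ : Fin n => V) W) :
    convexHull ℝ ((fun v : Fin n → V => h v) '' {v | ∀ i, v i ∈ P}) =
      convexHull ℝ ((fun v : Fin n → V => h v) '' {v | ∀ i, v i ∈ Set.extremePoints ℝ P}) := by
  have hP : P ⊆ convexHull ℝ (P.extremePoints ℝ) := hPcomp.subset_convexHull_extremePoints hPconv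
  apply Subset.antisymm
  · calc convexHull ℝ (h '' {v | ∀ i, v i ∈ P})
        ⊆ convexHull ℝ (h '' {v | ∀ i, v i ∈ convexHull ℝ (P.extremePoints ℝ)}) :=
          convexHull_mono (image_mono fun v hv i => hP (hv i))
      _ = convexHull ℝ (h '' {v | ∀ i, v i ∈ P.extremePoints ℝ}) :=
          h.convexHull_image_convexHull fun _ => P.extremePoints ℝ
  · exact convexHull_mono (image_mono fun v hv i => extremePoints_subset (hv i))

/-- Let `P ⊆ V` be a compact convex set in a finite-dimensional real vector space, `E` its
set of extreme points, and `h : Vⁿ → W` a multilinear map into a finite-dimensional real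
vector space.  Then the convex hull of `h(P × ⋯ × P)` equals the convex hull of
`h(E × ⋯ × E)`. -/
theorem convexHull_multilinear_image_eq_of_extremePoints {V W : Type*}
    [NormedAddCommGroup V] [NormedSpace ℝ V] [FiniteDimensional ℝ V]
    [AddCommGroup W] [Module ℝ W] [FiniteDimensional ℝ W]
    (n : ℕ) (hn : 0 < n)
    (P : Set V) (hPconv : Convex ℝ P) (hPcomp : IsCompact P)
    (h : MultilinearMap ℝ (fun _ : Fin n => V) W) :
    convexHull ℝ ((fun v : Fin n → V => h v) '' {v | ∀ i, v i ∈ P}) =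
      convexHull ℝ ((fun v : Fin n → V => h v) '' {v | ∀ i, v i ∈ Set.extremePoints ℝ P}) :=
  convexHull_multilinear_image_eq_of_extremePoints_general n P hPconv hPcomp h
end
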